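/- Fix n, β : ℕ. Suppose that for each i ∈ Fin n and each p ∈ Fin n we are given a departure-curve triple (f i p, g i p, h i p) with associated function F i p, and suppose that for every i ∈ Fin n and every pair p ≠ q in Fin n the elimination polynomial of the triples (f i p, g i p, h i p) and (f i q, g i q, h i q) is not the zero polynomial. Then the sum over all i ∈ Fin n and over all unordered pairs {p, q} of distinct indices in Fin n of the cardinality of {t : ℝ | F i p t = F i q t} is at most n · (n·(n−1)/2) · (16β + 8); in particular it is at most 8·(β+1)·n³. -/
import Mathlib


open Polynomial

/-- A departure-curve triple: polynomials (f, g, h) with deg f ≤ 2β+1,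
deg g ≤ 2β, deg h ≤ 4β+2, g everywhere positive and h everywhere
nonnegative. -/
structure DepartureTriple (β : ℕ) where
  f : Polynomial ℝ
  g : Polynomial ℝ
  h : Polynomial ℝ
  hf : f.natDegree ≤ 2 * β + 1
  hg : g.natDegree ≤ 2 * β
  hh : h.natDegree ≤ 4 * β + 2
  g_pos : ∀ t : ℝ, 0 < g.eval t
  h_nonneg : ∀ t : ℝ, 0 ≤ h.eval t

/-- The function F(t) = (f(t) + √h(t))/g(t) associated with a
departure-curve triple. -/
noncomputable def DepartureTriple.assoc {β : ℕ} (T : DepartureTriple β) : ℝ → ℝ :=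
  fun t => (T.f.eval t + Real.sqrt (T.h.eval t)) / T.g.eval t

/-- The elimination polynomial of two departure-curve triples. -/
noncomputable def eliminationPoly {β : ℕ} (T₁ T₂ : DepartureTriple β) : Polynomial ℝ :=
  ((T₁.f * T₂.g - T₂.f * T₁.g) ^ 2 - T₁.g ^ 2 * T₂.h - T₂.g ^ 2 * T₁.h) ^ 2
    - 4 * T₁.g ^ 2 * T₂.g ^ 2 * T₁.h * T₂.h

lemma elim_deg {β : ℕ} (T₁ T₂ : DepartureTriple β) :
    (eliminationPoly T₁ T₂).natDegree ≤ 16 * β + 8 := by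
  have hf₁ := T₁.hf; have hg₁ := T₁.hg; have hh₁ := T₁.hh
  have hf₂ := T₂.hf; have hg₂ := T₂.hg; have hh₂ := T₂.hh
  have h1 : (T₁.f * T₂.g - T₂.f * T₁.g).natDegree ≤ 4 * β + 1 :=
    le_trans (natDegree_sub_le _ _)
      (max_le (le_trans natDegree_mul_le (by omega))
        (le_trans natDegree_mul_le (by omega)))
  have h2 : (T₁.g ^ 2 * T₂.h).natDegree ≤ 8 * β + 2 := by
    refine le_trans natDegree_mul_le ?_
    have := natDegree_pow_le (p := T₁.g) (n := 2)
    omega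
  have h3 : (T₂.g ^ 2 * T₁.h).natDegree ≤ 8 * β + 2 := by
    refine le_trans natDegree_mul_le ?_
    have := natDegree_pow_le (p := T₂.g) (n := 2)
    omega
  have hA : ((T₁.f * T₂.g - T₂.f * T₁.g) ^ 2 - T₁.g ^ 2 * T₂.h
      - T₂.g ^ 2 * T₁.h).natDegree ≤ 8 * β + 2 := by
    refine le_trans (natDegree_sub_le _ _) (max_le (le_trans (natDegree_sub_le _ _)
      (max_le ?_ h2)) h3)
    have := natDegree_pow_le (p := T₁.f * T₂.g - T₂.f * T₁.g) (n := 2)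
    omega
  have hB : (4 * T₁.g ^ 2 * T₂.g ^ 2 * T₁.h * T₂.h).natDegree ≤ 16 * β + 8 := by
    have p1 := natDegree_pow_le (p := T₁.g) (n := 2)
    have p2 := natDegree_pow_le (p := T₂.g) (n := 2)
    have c4 : (4 : Polynomial ℝ).natDegree = 0 := natDegree_ofNat 4
    calc (4 * T₁.g ^ 2 * T₂.g ^ 2 * T₁.h * T₂.h).natDegree
        ≤ (4 * T₁.g ^ 2 * T₂.g ^ 2 * T₁.h).natDegree + T₂.h.natDegree := natDegree_mul_le
      _ ≤ ((4 * T₁.g ^ 2 * T₂.g ^ 2).natDegree + T₁.h.natDegree) + T₂.h.natDegree := by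
          gcongr; exact natDegree_mul_le
      _ ≤ (((4 * T₁.g ^ 2).natDegree + (T₂.g ^ 2).natDegree) + T₁.h.natDegree)
            + T₂.h.natDegree := by gcongr; exact natDegree_mul_le
      _ ≤ ((((4 : Polynomial ℝ).natDegree + (T₁.g ^ 2).natDegree) + (T₂.g ^ 2).natDegree)
            + T₁.h.natDegree) + T₂.h.natDegree := by gcongr; exact natDegree_mul_le
      _ ≤ 16 * β + 8 := by omega
  refine le_trans (natDegree_sub_le _ _) (max_le ?_ hB)
  have := natDegree_pow_le (p := (T₁.f * T₂.g - T₂.f * T₁.g) ^ 2 - T₁.g ^ 2 * T₂.h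
      - T₂.g ^ 2 * T₁.h) (n := 2)
  omega

lemma elim_card {β : ℕ} (T₁ T₂ : DepartureTriple β)
    (hP : eliminationPoly T₁ T₂ ≠ 0) :
    {t : ℝ | T₁.assoc t = T₂.assoc t}.ncard ≤ 16 * β + 8 := by
  have hsub : {t : ℝ | T₁.assoc t = T₂.assoc t} ⊆
      ↑(eliminationPoly T₁ T₂).roots.toFinset := by
    intro t ht
    simp only [Set.mem_setOf_eq, DepartureTriple.assoc] at ht
    simp only [Finset.coe_sort_coe, Multiset.mem_toFinset, Finset.mem_coe,
      mem_roots hP, IsRoot.def]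
    have hb := T₁.g_pos t
    have hd := T₂.g_pos t
    have hs₁ : Real.sqrt (T₁.h.eval t) ^ 2 = T₁.h.eval t := Real.sq_sqrt (T₁.h_nonneg t)
    have hs₂ : Real.sqrt (T₂.h.eval t) ^ 2 = T₂.h.eval t := Real.sq_sqrt (T₂.h_nonneg t)
    rw [div_eq_div_iff hb.ne' hd.ne'] at ht
    have hu : T₁.f.eval t * T₂.g.eval t - T₂.f.eval t * T₁.g.eval t
        = T₁.g.eval t * Real.sqrt (T₂.h.eval t)
          - T₂.g.eval t * Real.sqrt (T₁.h.eval t) := by linear_combination ht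
    simp only [eliminationPoly, eval_sub, eval_mul, eval_pow, eval_ofNat]
    rw [← hs₁, ← hs₂, hu]
    ring
  calc {t : ℝ | T₁.assoc t = T₂.assoc t}.ncard
      ≤ ((eliminationPoly T₁ T₂).roots.toFinset : Set ℝ).ncard :=
        Set.ncard_le_ncard hsub (Finset.finite_toSet _)
    _ = (eliminationPoly T₁ T₂).roots.toFinset.card := Set.ncard_coe_finset _
    _ ≤ Multiset.card (eliminationPoly T₁ T₂).roots := Multiset.toFinset_card_le _
    _ ≤ (eliminationPoly T₁ T₂).natDegree := card_roots' _
    _ ≤ 16 * β + 8 := elim_deg T₁ T₂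

/-- Corollary 3.1 of the paper: the arrangement size (total number of
intersections between departure curves, summed over the n discs and over all
unordered pairs of distinct departure curves of each disc) is at most
n · (n·(n−1)/2) · (16β + 8), hence at most 8·(β+1)·n³. -/
theorem arrangement_size_bound (n β : ℕ) (T : Fin n → Fin n → DepartureTriple β)
    (hP : ∀ i p q : Fin n, p ≠ q → eliminationPoly (T i p) (T i q) ≠ 0) :
    (∑ i : Fin n, ∑ p : Fin n, ∑ q ∈ Finset.Ioi p,
        {t : ℝ | (T i p).assoc t = (T i q).assoc t}.ncard)
      ≤ n * (n * (n - 1) / 2) * (16 * β + 8) ∧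
    (∑ i : Fin n, ∑ p : Fin n, ∑ q ∈ Finset.Ioi p,
        {t : ℝ | (T i p).assoc t = (T i q).assoc t}.ncard)
      ≤ 8 * (β + 1) * n ^ 3 := by
  have hcount : ∑ p : Fin n, (Finset.Ioi p).card = n * (n - 1) / 2 := by
    simp only [Fin.card_Ioi]
    rw [Fin.sum_univ_eq_sum_range (fun k => n - 1 - k)]
    rw [← Finset.sum_range_id n]
    exact Finset.sum_range_reflect id n
  have hmain : (∑ i : Fin n, ∑ p : Fin n, ∑ q ∈ Finset.Ioi p,
      {t : ℝ | (T i p).assoc t = (T i q).assoc t}.ncard)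
      ≤ n * (n * (n - 1) / 2) * (16 * β + 8) := by
    calc (∑ i : Fin n, ∑ p : Fin n, ∑ q ∈ Finset.Ioi p,
        {t : ℝ | (T i p).assoc t = (T i q).assoc t}.ncard)
        ≤ ∑ _i : Fin n, ∑ p : Fin n, ∑ _q ∈ Finset.Ioi p, (16 * β + 8) := by
          refine Finset.sum_le_sum fun i _ => Finset.sum_le_sum fun p _ =>
            Finset.sum_le_sum fun q hq => ?_
          exact elim_card _ _ (hP i p q (Finset.mem_Ioi.mp hq).ne'.symm)
      _ = n * (n * (n - 1) / 2) * (16 * β + 8) := by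
          simp only [Finset.sum_const, smul_eq_mul, ← Finset.sum_mul, hcount,
            Finset.card_univ, Fintype.card_fin]
          ring
  refine ⟨hmain, le_trans hmain ?_⟩
  have hdiv : n * (n - 1) / 2 * 2 ≤ n * (n - 1) := Nat.div_mul_le_self _ 2
  calc n * (n * (n - 1) / 2) * (16 * β + 8)
      = n * (n * (n - 1) / 2 * 2) * (8 * β + 4) := by ring
    _ ≤ n * (n * (n - 1)) * (8 * β + 4) := by gcongr
    _ ≤ n * (n * n) * (8 * β + 8) := by gcongr <;> omega
    _ = 8 * (β + 1) * n ^ 3 := by ring
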